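/- arXiv:2507.09396 — 2 statements merged into one kernel-verified Lean document; each statement's English description precedes it below -/
import Mathlib

section
/- The set {id, (2 7 4)(3 6 5), (2 4 7)(3 5 6)} is exactly the automorphism group of the oriented Steiner triple system on {1,...,7} with oriented triples [1,2,3], [1,4,5], [1,7,6], [2,4,6], [2,5,7], [3,4,7], [3,5,6]. -/
set_option maxRecDepth 20000
set_option maxHeartbeats 1000000
set_option synthInstance.maxSize 2000
set_option synthInstance.maxHeartbeats 2000000

/-- The three cyclic rotations of an ordered triple. -/
def rots7 (t : Fin 7 × Fin 7 × Fin 7) : List (Fin 7 × Fin 7 × Fin 7) :=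
  [(t.1, t.2.1, t.2.2), (t.2.1, t.2.2, t.1), (t.2.2, t.1, t.2.1)]

/-- The oriented triples `[1,2,3],[1,4,5],[1,7,6],[2,4,6],[2,5,7],[3,4,7],[3,5,6]`
(0-indexed), closed under cyclic rotation. -/
def LA : List (Fin 7 × Fin 7 × Fin 7) :=
  ([(0,1,2), (0,3,4), (0,6,5), (1,3,5), (1,4,6), (2,3,6), (2,4,5)] :
      List (Fin 7 × Fin 7 × Fin 7)).flatMap rots7

/-- The permutation `(2 7 4)(3 6 5)` (on `{1,…,7}`, here 0-indexed: `(1 6 3)(2 5 4)`). -/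
def sigma274 : Equiv.Perm (Fin 7) :=
  ⟨![0, 6, 5, 1, 2, 4, 3], ![0, 3, 4, 6, 5, 2, 1], by decide, by decide⟩

/-- The permutation `(2 4 7)(3 5 6)` (on `{1,…,7}`, here 0-indexed: `(1 3 6)(2 4 5)`). -/
def sigma247 : Equiv.Perm (Fin 7) :=
  ⟨![0, 3, 4, 6, 5, 2, 1], ![0, 6, 5, 1, 2, 4, 3], by decide, by decide⟩

def chk : Bool :=
  LA.all fun t1 => LA.all fun t2 => !(decide (t2.1 = t1.1)) ||
    (LA.all fun t3 => !(decide (t3.1 = t1.1)) ||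
      (LA.all fun t4 => !(decide (t4.1 = t1.2.1)) || !(decide (t4.2.1 = t2.2.1)) ||
          !(decide (t4.2.2 = t3.2.2)) ||
        (LA.all fun t5 => !(decide (t5.1 = t1.2.1)) || !(decide (t5.2.1 = t2.2.2)) ||
            !(decide (t5.2.2 = t3.2.1)) ||
          !(decide ((t1.2.2, t2.2.1, t3.2.1) ∈ LA)) ||
          !(decide ((t1.2.2, t2.2.2, t3.2.2) ∈ LA)) ||
          (decide ((t1.1, t1.2.1, t1.2.2, t2.2.1, t2.2.2, t3.2.2, t3.2.1) =
              ((0,1,2,3,4,5,6) : Fin 7 × Fin 7 × Fin 7 × Fin 7 × Fin 7 × Fin 7 × Fin 7)) ||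
           decide ((t1.1, t1.2.1, t1.2.2, t2.2.1, t2.2.2, t3.2.2, t3.2.1) = (0,3,4,6,5,2,1)) ||
           decide ((t1.1, t1.2.1, t1.2.2, t2.2.1, t2.2.2, t3.2.2, t3.2.1) = (0,6,5,1,2,4,3))))))

lemma key7 : ∀ t1 ∈ LA, ∀ t2 ∈ LA, t2.1 = t1.1 → ∀ t3 ∈ LA, t3.1 = t1.1 →
    ∀ t4 ∈ LA, t4.1 = t1.2.1 → t4.2.1 = t2.2.1 → t4.2.2 = t3.2.2 →
    ∀ t5 ∈ LA, t5.1 = t1.2.1 → t5.2.1 = t2.2.2 → t5.2.2 = t3.2.1 →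
    (t1.2.2, t2.2.1, t3.2.1) ∈ LA → (t1.2.2, t2.2.2, t3.2.2) ∈ LA →
    (t1.1, t1.2.1, t1.2.2, t2.2.1, t2.2.2, t3.2.2, t3.2.1) =
        ((0,1,2,3,4,5,6) : Fin 7 × Fin 7 × Fin 7 × Fin 7 × Fin 7 × Fin 7 × Fin 7) ∨
    (t1.1, t1.2.1, t1.2.2, t2.2.1, t2.2.2, t3.2.2, t3.2.1) = (0,3,4,6,5,2,1) ∨
    (t1.1, t1.2.1, t1.2.2, t2.2.1, t2.2.2, t3.2.2, t3.2.1) = (0,6,5,1,2,4,3) := by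
  have h : chk = true := by decide
  simp only [chk, List.all_eq_true, Bool.or_eq_true, Bool.not_eq_true',
    decide_eq_false_iff_not, decide_eq_true_eq] at h
  intro t1 h1 t2 h2 e2 t3 h3 e3 t4 h4 e41 e42 e43 t5 h5 e51 e52 e53 mA mB
  have H1 := ((h t1 h1 t2 h2).resolve_left (not_not_intro e2) t3 h3).resolve_left
    (not_not_intro e3)
  have H2 := (H1 t4 h4).resolve_left (by simp [e41, e42, e43])
  have H3 := (H2 t5 h5).resolve_left (by simp [e51, e52, e53, mA, mB])
  tauto

lemma eqPerm (φ ψ : Equiv.Perm (Fin 7)) (h0 : φ 0 = ψ 0) (h1 : φ 1 = ψ 1)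
    (h2 : φ 2 = ψ 2) (h3 : φ 3 = ψ 3) (h4 : φ 4 = ψ 4) (h5 : φ 5 = ψ 5)
    (h6 : φ 6 = ψ 6) : φ = ψ := by
  refine Equiv.ext fun i => ?_
  match i with
  | ⟨0, _⟩ => exact h0
  | ⟨1, _⟩ => exact h1
  | ⟨2, _⟩ => exact h2
  | ⟨3, _⟩ => exact h3
  | ⟨4, _⟩ => exact h4
  | ⟨5, _⟩ => exact h5
  | ⟨6, _⟩ => exact h6

/-- The automorphism group of this oriented Steiner triple system is exactly
`{id, (2 7 4)(3 6 5), (2 4 7)(3 5 6)}`. -/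
theorem sts7_aut_group :
    {φ : Equiv.Perm (Fin 7) |
        ∀ a b c : Fin 7, (a, b, c) ∈ LA ↔ (φ a, φ b, φ c) ∈ LA} =
      {Equiv.refl (Fin 7), sigma274, sigma247} := by
  ext φ
  simp only [Set.mem_setOf_eq, Set.mem_insert_iff, Set.mem_singleton_iff]
  constructor
  · intro h
    have m1 := (h 0 1 2).mp (by decide)
    have m2 := (h 0 3 4).mp (by decide)
    have m3 := (h 0 6 5).mp (by decide)
    have m4 := (h 1 3 5).mp (by decide)
    have m5 := (h 1 4 6).mp (by decide)
    have m6 := (h 2 3 6).mp (by decide)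
    have m7 := (h 2 4 5).mp (by decide)
    have k := key7 _ m1 _ m2 rfl _ m3 rfl _ m4 rfl rfl rfl _ m5 rfl rfl rfl m6 m7
    simp only [Prod.mk.injEq] at k
    rcases k with ⟨e0, e1, e2, e3, e4, e5, e6⟩ | ⟨e0, e1, e2, e3, e4, e5, e6⟩ |
      ⟨e0, e1, e2, e3, e4, e5, e6⟩
    · exact Or.inl (eqPerm _ _ (e0.trans rfl) (e1.trans rfl) (e2.trans rfl) (e3.trans rfl)
        (e4.trans rfl) (e5.trans rfl) (e6.trans rfl))
    · exact Or.inr (Or.inr (eqPerm _ _ (e0.trans rfl) (e1.trans rfl) (e2.trans rfl)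
        (e3.trans rfl) (e4.trans rfl) (e5.trans rfl) (e6.trans rfl)))
    · exact Or.inr (Or.inl (eqPerm _ _ (e0.trans rfl) (e1.trans rfl) (e2.trans rfl)
        (e3.trans rfl) (e4.trans rfl) (e5.trans rfl) (e6.trans rfl)))
  · rintro (rfl | rfl | rfl)
    · intro a b c; rfl
    · show ∀ a b c : Fin 7, (a, b, c) ∈ LA ↔ (sigma274 a, sigma274 b, sigma274 c) ∈ LA
      decide
    · show ∀ a b c : Fin 7, (a, b, c) ∈ LA ↔ (sigma247 a, sigma247 b, sigma247 c) ∈ LA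
      decide
end

section
/- Let × be the Steiner product on ℝ^9 induced by the oriented Steiner triple system on nine elements with oriented triples [1,2,3], [1,4,7], [1,5,9], [1,6,8], [2,4,9], [2,5,8], [2,6,7], [3,4,8], [3,5,7], [3,6,9], [4,5,6], [7,8,9]. Then (s1 + s2 + s3) × (s4 - s5) = 0; in particular s1 + s2 + s3 is a zero-divisor for this Steiner product. -/
/-- The three cyclic rotations of an ordered triple. -/
def rots9 (t : Fin 9 × Fin 9 × Fin 9) : List (Fin 9 × Fin 9 × Fin 9) :=
  [(t.1, t.2.1, t.2.2), (t.2.1, t.2.2, t.1), (t.2.2, t.1, t.2.1)]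

/-- The oriented triples `[1,2,3],[1,4,7],[1,5,9],[1,6,8],[2,4,9],[2,5,8],[2,6,7],
[3,4,8],[3,5,7],[3,6,9],[4,5,6],[7,8,9]` (0-indexed), closed under cyclic rotation. -/
def L9 : List (Fin 9 × Fin 9 × Fin 9) :=
  ([(0,1,2), (0,3,6), (0,4,8), (0,5,7), (1,3,8), (1,4,7), (1,5,6),
    (2,3,7), (2,4,6), (2,5,8), (3,4,5), (6,7,8)] :
      List (Fin 9 × Fin 9 × Fin 9)).flatMap rots9

/-- The structure constant of the induced Steiner product. -/
def eps9 (i j x : Fin 9) : ℝ :=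
  if (i, j, x) ∈ L9 then 1 else if (j, i, x) ∈ L9 then -1 else 0

/-- The Steiner product on `ℝ^9` induced by the oriented triples in `L9`. -/
def cross9 (u v : Fin 9 → ℝ) : Fin 9 → ℝ :=
  fun x => ∑ i : Fin 9, ∑ j : Fin 9, eps9 i j x * u i * v j

set_option maxHeartbeats 400000 in
lemma sts9_key : cross9 (Pi.single 0 1 + Pi.single 1 1 + Pi.single 2 1)
        (Pi.single 3 1 - Pi.single 4 1) = 0 := by
  funext x
  have h : ∀ x : Fin 9, cross9 (Pi.single 0 1 + Pi.single 1 1 + Pi.single 2 1)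
      (Pi.single 3 1 - Pi.single 4 1) x =
      (eps9 0 3 x + eps9 1 3 x + eps9 2 3 x) - (eps9 0 4 x + eps9 1 4 x + eps9 2 4 x) := by
    intro x
    simp (config := { decide := true }) only [cross9, Pi.add_apply, Pi.sub_apply,
      Pi.single_apply, Fin.sum_univ_succ, Fin.sum_univ_zero, if_true, if_false,
      mul_ite, ite_mul, mul_one, mul_zero, zero_mul, one_mul, add_zero, zero_add,
      mul_neg, neg_zero]
    norm_num [show (Fin.succ 0 : Fin 9) = 1 from rfl,
      show ((Fin.succ 0).succ : Fin 9) = 2 from rfl,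
      show ((Fin.succ 0).succ.succ : Fin 9) = 3 from rfl,
      show ((Fin.succ 0).succ.succ.succ : Fin 9) = 4 from rfl,
      show (Fin.succ 2 : Fin 9) = 3 from rfl,
      show ((Fin.succ 2).succ : Fin 9) = 4 from rfl]
    ring
  rw [h]
  fin_cases x <;> simp (config := { decide := true }) only [eps9, if_true, if_false] <;> norm_num

/-- For this oriented Steiner triple system on nine elements,
`(s1+s2+s3) × (s4 - s5) = 0`; in particular `s1+s2+s3` is a zero-divisor. -/
theorem sts9_zero_divisor :
    cross9 (Pi.single 0 1 + Pi.single 1 1 + Pi.single 2 1)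
        (Pi.single 3 1 - Pi.single 4 1) = 0 ∧
    ∃ u : Fin 9 → ℝ,
      Submodule.span ℝ ({u} : Set (Fin 9 → ℝ)) ≠
        Submodule.span ℝ
          ({Pi.single 0 1 + Pi.single 1 1 + Pi.single 2 1} : Set (Fin 9 → ℝ)) ∧
      cross9 (Pi.single 0 1 + Pi.single 1 1 + Pi.single 2 1) u = 0 := by
  refine ⟨sts9_key, Pi.single 3 1 - Pi.single 4 1, ?_, sts9_key⟩
  intro h
  have hw : (Pi.single 0 1 + Pi.single 1 1 + Pi.single 2 1 : Fin 9 → ℝ) ∈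
      Submodule.span ℝ ({Pi.single 3 1 - Pi.single 4 1} : Set (Fin 9 → ℝ)) := by
    rw [h]; exact Submodule.mem_span_singleton_self _
  rw [Submodule.mem_span_singleton] at hw
  obtain ⟨c, hc⟩ := hw
  have := congrFun hc 0
  simp [Pi.single_apply] at this
end
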